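/- The BiSample mechanism satisfies ε-local differential privacy: for any v1, v2 ∈ [−1,1] and any output pair (s,b) ∈ {0,1}², Pr[BiSample(v1)=(s,b)] ≤ e^ε · Pr[BiSample(v2)=(s,b)]. -/
import Mathlib


open Real

/-- Output distribution of the BiSample mechanism on input `v`:
choose direction `s` uniformly; if `s = 0` (negative sampling), `b = 1` w.p.
`((1−e^ε)/(1+e^ε))·(v/2) + 1/2`; if `s = 1` (positive sampling), `b = 1` w.p.
`((e^ε−1)/(e^ε+1))·(v/2) + 1/2`. -/
noncomputable def biSampleProb (ε v : ℝ) : Bool × Bool → ℝ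
  | (s, b) =>
    let g := if s then (exp ε - 1) / (exp ε + 1) * (v / 2) + 1 / 2
             else (1 - exp ε) / (1 + exp ε) * (v / 2) + 1 / 2
    1 / 2 * (if b then g else 1 - g)

/-- The BiSample mechanism satisfies ε-local differential privacy. -/
theorem biSample_ldp (ε : ℝ) (hε : 0 < ε) (v1 v2 : ℝ)
    (hv1 : v1 ∈ Set.Icc (-1 : ℝ) 1) (hv2 : v2 ∈ Set.Icc (-1 : ℝ) 1)
    (o : Bool × Bool) :
    biSampleProb ε v1 o ≤ exp ε * biSampleProb ε v2 o := by
  obtain ⟨ha1, hb1⟩ := hv1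
  obtain ⟨ha2, hb2⟩ := hv2
  have hE : 1 < exp ε := by nlinarith [Real.add_one_le_exp ε]
  have hpos : (0 : ℝ) < exp ε + 1 := by linarith
  have hpos' : (0 : ℝ) < 1 + exp ε := by linarith
  have hs1 : (exp ε - 1) / (exp ε + 1) * (exp ε + 1) = exp ε - 1 :=
    div_mul_cancel₀ _ hpos.ne'
  have hs2 : (1 - exp ε) / (1 + exp ε) * (1 + exp ε) = 1 - exp ε :=
    div_mul_cancel₀ _ hpos'.ne'
  have ht1 : 0 ≤ (exp ε - 1) / (exp ε + 1) := div_nonneg (by linarith) hpos.le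
  have ht2 : (1 - exp ε) / (1 + exp ε) ≤ 0 :=
    div_nonpos_of_nonpos_of_nonneg (by linarith) hpos'.le
  obtain ⟨s, b⟩ := o
  cases s <;> cases b <;> simp only [biSampleProb, if_true, if_false, Bool.false_eq_true,
    ite_true, ite_false] <;> nlinarith [hs1, hs2, mul_pos hpos hpos',
    mul_le_mul_of_nonneg_left hb1 ht1, mul_le_mul_of_nonneg_left ha1 ht1,
    mul_le_mul_of_nonpos_left hb1 ht2, mul_le_mul_of_nonpos_left ha1 ht2,
    mul_le_mul_of_nonneg_left hb2 ht1, mul_le_mul_of_nonneg_left ha2 ht1,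
    mul_le_mul_of_nonpos_left hb2 ht2, mul_le_mul_of_nonpos_left ha2 ht2]
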